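/- arXiv:2106.13951 — 4 statements merged into one kernel-verified Lean document; each statement's English description precedes it below -/
import Mathlib

section
/- (NFDH strip packing bound) A set I of rectangles with widths at most 1 can be packed by the Next-Fit Decreasing Height algorithm into a strip of width 1 and height at most 2·a(I) + max_{i∈I} h(i), where a(I) is the total area of the rectangles. -/
/-!
Every shelf except the last is closed because the next item `b` does not fit, so the widths
of the shelf plus `w b` exceed `1`; as the items of the shelf are at least as tall as `b`, the
area of the shelf plus `w b · h b` is at least `h b`, the height of the next shelf. Hence, by
induction along the sorted list, the height is at most `h a + 2·a(I) - w a · h a` for the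
tallest item `a`.
-/

open Set

namespace NFDH

theorem Ioo_disjoint_Ioo_of_le {α : Type*} [Preorder α] {a b c d : α} (h : b ≤ c) :
    Disjoint (Ioo a b) (Ioo c d) :=
  disjoint_left.mpr fun _ hx hy => lt_asymm (hx.2.trans_le h) hy.1

theorem Ioo_disjoint_Ioo_add_left_iff (c : ℝ) {a₁ a₂ b₁ b₂ : ℝ} :
    Disjoint (Ioo (c + a₁) (c + a₂)) (Ioo (c + b₁) (c + b₂)) ↔
      Disjoint (Ioo a₁ a₂) (Ioo b₁ b₂) := by
  simp only [Ioo_disjoint_Ioo, min_add_add_left, max_add_add_left, add_le_add_iff_left]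

variable {ι : Type*} (w h : ι → ℝ)

/-- A next-fit shelf of width `cap`: the longest prefix of `L` that fits, and the rest. -/
noncomputable def shelfSplit : ℝ → List ι → List ι × List ι
  | _, [] => ([], [])
  | cap, a :: t =>
    if w a ≤ cap then
      let p := shelfSplit (cap - w a) t
      (a :: p.1, p.2)
    else ([], a :: t)

def area (L : List ι) : ℝ := (L.map fun i => w i * h i).sum

/-- `h a + 2·a(L) - w a · h a` for `L = a :: t`: the invariant of the induction. -/
def nfdhBound : List ι → ℝ
  | [] => 0
  | a :: t => h a + w a * h a + 2 * area w h t

def rect (x y : ι → ℝ) (i : ι) : Set (ℝ × ℝ) :=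
  Ioo (x i) (x i + w i) ×ˢ Ioo (y i) (y i + h i)

/-- Item `i` has lower left corner `(x i, y i)`. -/
structure IsStripPacking (s : Set ι) (x y : ι → ℝ) (H : ℝ) : Prop where
  mem_strip : ∀ i ∈ s, 0 ≤ x i ∧ x i + w i ≤ 1 ∧ 0 ≤ y i ∧ y i + h i ≤ H
  pairwiseDisjoint : s.PairwiseDisjoint (rect w h x y)

variable {w h}

theorem shelfSplit_fst_append_snd (cap : ℝ) (L : List ι) :
    (shelfSplit w cap L).1 ++ (shelfSplit w cap L).2 = L := by
  induction L generalizing cap with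
  | nil => rfl
  | cons a t ih =>
    by_cases hfit : w a ≤ cap
    · simp [shelfSplit, hfit, ih]
    · simp [shelfSplit, hfit]

theorem length_shelfSplit_snd_le (cap : ℝ) (L : List ι) :
    (shelfSplit w cap L).2.length ≤ L.length := by
  conv_rhs => rw [← shelfSplit_fst_append_snd (w := w) cap L]
  simp

theorem sum_shelfSplit_fst_le {cap : ℝ} (hcap : 0 ≤ cap) (L : List ι) :
    ((shelfSplit w cap L).1.map w).sum ≤ cap := by
  induction L generalizing cap with
  | nil => simpa [shelfSplit] using hcap
  | cons a t ih =>
    by_cases hfit : w a ≤ cap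
    · have := ih (sub_nonneg.mpr hfit)
      simp only [shelfSplit, hfit, if_pos, List.map_cons, List.sum_cons]
      linarith
    · simp [shelfSplit, hfit, hcap]

theorem lt_sum_shelfSplit_fst_add {cap : ℝ} {L : List ι} {b : ι}
    (hb : b ∈ (shelfSplit w cap L).2.head?) :
    cap < ((shelfSplit w cap L).1.map w).sum + w b := by
  induction L generalizing cap with
  | nil => simp [shelfSplit] at hb
  | cons a t ih =>
    by_cases hfit : w a ≤ cap
    · simp only [shelfSplit, hfit, if_pos, List.map_cons, List.sum_cons] at hb ⊢
      linarith [ih hb]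
    · simp only [shelfSplit, hfit, if_neg, not_false_iff, List.head?_cons,
        Option.mem_def, Option.some.injEq] at hb ⊢
      subst hb
      simpa using lt_of_not_ge hfit

theorem area_nonneg {L : List ι} (hL : ∀ i ∈ L, 0 ≤ w i * h i) : 0 ≤ area w h L :=
  List.sum_nonneg (by simpa using hL)

theorem le_area_add_of_one_le {S : List ι} {b : ι} (hS : ∀ i ∈ S, 0 ≤ w i ∧ h b ≤ h i)
    (hb : 0 ≤ h b) (hover : 1 ≤ (S.map w).sum + w b) :
    h b ≤ area w h S + w b * h b :=
  calc h b ≤ ((S.map w).sum + w b) * h b := le_mul_of_one_le_left hb hover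
    _ = (S.map fun i => w i * h b).sum + w b * h b := by rw [List.sum_map_mul_right, add_mul]
    _ ≤ area w h S + w b * h b := by
      gcongr
      exact List.sum_le_sum fun i hi => mul_le_mul_of_nonneg_left (hS i hi).2 (hS i hi).1

theorem nfdhBound_cons_le {a : ι} {t : List ι} (ha : 0 ≤ w a * h a) :
    nfdhBound w h (a :: t) ≤ 2 * area w h (a :: t) + h a := by
  simp only [nfdhBound, area, List.map_cons, List.sum_cons]
  linarith

theorem add_nfdhBound_le {a : ι} {s r : List ι} (hnn : ∀ i ∈ a :: s, 0 ≤ w i * h i)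
    (hover : ∀ b ∈ r.head?, h b ≤ area w h (a :: s) + w b * h b) :
    h a + nfdhBound w h r ≤ nfdhBound w h (a :: (s ++ r)) := by
  have hs := area_nonneg fun i hi => hnn i (List.mem_cons_of_mem a hi)
  have ha := hnn a List.mem_cons_self
  cases r with
  | nil => simp only [nfdhBound, List.append_nil]; linarith
  | cons b r =>
    have hb := hover b rfl
    simp only [nfdhBound, area, List.map_cons, List.map_append, List.sum_cons,
      List.sum_append] at hb hs ⊢
    linarith

theorem exists_pairwiseDisjoint_Ioo (l : List ι) (hw : ∀ i ∈ l, 0 ≤ w i) :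
    ∃ x : ι → ℝ, (∀ i ∈ l, 0 ≤ x i ∧ x i + w i ≤ (l.map w).sum) ∧
      {i | i ∈ l}.PairwiseDisjoint fun i => Ioo (x i) (x i + w i) := by
  induction l with
  | nil => exact ⟨0, by simp, by simp⟩
  | cons a t ih =>
    have hwt : ∀ i ∈ t, 0 ≤ w i := fun i hi => hw i (List.mem_cons_of_mem a hi)
    obtain ⟨x, hfit, hdisj⟩ := ih hwt
    have ha := hw a List.mem_cons_self
    have ht : 0 ≤ (t.map w).sum := List.sum_nonneg (by simpa using hwt)
    classical
    refine ⟨fun i => if i = a then 0 else w a + x i, ?_, ?_⟩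
    · intro i hi
      by_cases hia : i = a
      · subst hia; simp [ht]
      · have := hfit i ((List.mem_cons.mp hi).resolve_left hia)
        simp only [hia, if_false, List.map_cons, List.sum_cons]
        constructor <;> linarith
    · intro i hi j hj hij
      have hsep : ∀ j ∈ t, j ≠ a →
          Disjoint (Ioo 0 (0 + w a)) (Ioo (w a + x j) (w a + x j + w j)) :=
        fun j hj _ => Ioo_disjoint_Ioo_of_le (by linarith [(hfit j hj).1])
      have mem_t : ∀ {k}, k ∈ {i | i ∈ a :: t} → k ≠ a → k ∈ t :=
        fun hk hka => (List.mem_cons.mp hk).resolve_left hka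
      by_cases hia : i = a <;> by_cases hja : j = a <;>
        simp only [Function.onFun, hia, hja, if_true, if_false]
      · exact absurd (hia.trans hja.symm) hij
      · exact hsep j (mem_t hj hja) hja
      · exact (hsep i (mem_t hi hia) hia).symm
      · rw [add_assoc, add_assoc, Ioo_disjoint_Ioo_add_left_iff]
        exact hdisj (mem_t hi hia) (mem_t hj hja) hij

theorem exists_isStripPacking_shelf {S : List ι} {H : ℝ} (hw : ∀ i ∈ S, 0 ≤ w i)
    (hwidth : (S.map w).sum ≤ 1) (hh : ∀ i ∈ S, h i ≤ H) :
    ∃ x, IsStripPacking w h {i | i ∈ S} x 0 H := by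
  obtain ⟨x, hfit, hdisj⟩ := exists_pairwiseDisjoint_Ioo S hw
  refine ⟨x, fun i hi => ?_, fun i hi j hj hij => ?_⟩
  · exact ⟨(hfit i hi).1, (hfit i hi).2.trans hwidth, le_rfl, by simpa using hh i hi⟩
  · exact disjoint_prod.mpr (Or.inl (hdisj hi hj hij))

theorem IsStripPacking.union {A B : Set ι} [DecidablePred (· ∈ A)] {xA yA xB yB : ι → ℝ}
    {HA HB : ℝ} (hA : IsStripPacking w h A xA yA HA) (hB : IsStripPacking w h B xB yB HB)
    (hHA : 0 ≤ HA) (hHB : 0 ≤ HB) :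
    IsStripPacking w h (A ∪ B) (A.piecewise xA xB) (A.piecewise yA fun i => HA + yB i)
      (HA + HB) := by
  have below : ∀ i ∈ A, ∀ j, j ∉ A → j ∈ B →
      Disjoint (rect w h (A.piecewise xA xB) (A.piecewise yA fun i => HA + yB i) i)
        (rect w h (A.piecewise xA xB) (A.piecewise yA fun i => HA + yB i) j) := by
    intro i hi j hjA hj
    simp only [rect, piecewise_eq_of_mem _ _ _ hi, piecewise_eq_of_notMem _ _ _ hjA]
    exact disjoint_prod.mpr <| Or.inr <| Ioo_disjoint_Ioo_of_le <| by
      linarith [(hA.mem_strip i hi).2.2.2, (hB.mem_strip j hj).2.2.1]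
  constructor
  · intro i hi
    by_cases hiA : i ∈ A
    · simp only [piecewise_eq_of_mem _ _ _ hiA]
      obtain ⟨h₁, h₂, h₃, h₄⟩ := hA.mem_strip i hiA
      exact ⟨h₁, h₂, h₃, by linarith⟩
    · simp only [piecewise_eq_of_notMem _ _ _ hiA]
      obtain ⟨h₁, h₂, h₃, h₄⟩ := hB.mem_strip i (hi.resolve_left hiA)
      exact ⟨h₁, h₂, by linarith, by linarith⟩
  · intro i hi j hj hij
    by_cases hiA : i ∈ A <;> by_cases hjA : j ∈ A
    · simpa only [Function.onFun, rect, piecewise_eq_of_mem _ _ _ hiA,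
        piecewise_eq_of_mem _ _ _ hjA] using hA.pairwiseDisjoint hiA hjA hij
    · exact below i hiA j hjA (hj.resolve_left hjA)
    · exact (below j hjA i hiA (hi.resolve_left hiA)).symm
    · have := disjoint_prod.mp
        (hB.pairwiseDisjoint (hi.resolve_left hiA) (hj.resolve_left hjA) hij)
      simp only [Function.onFun, rect, piecewise_eq_of_notMem _ _ _ hiA,
        piecewise_eq_of_notMem _ _ _ hjA, add_assoc, disjoint_prod,
        Ioo_disjoint_Ioo_add_left_iff]
      exact this

/-- NFDH on a list sorted by non-increasing height: the first shelf holds the head `a` and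
the next-fit prefix of the tail, and the rest is packed recursively on top of it. -/
theorem exists_isStripPacking_le_nfdhBound :
    ∀ L : List ι, L.Pairwise (fun i j => h j ≤ h i) →
      (∀ i ∈ L, 0 ≤ w i ∧ w i ≤ 1) → (∀ i ∈ L, 0 ≤ h i) →
    ∃ H x y, 0 ≤ H ∧ H ≤ nfdhBound w h L ∧ IsStripPacking w h {i | i ∈ L} x y H
  | [], _, _, _ => ⟨0, 0, 0, le_rfl, le_rfl, by simp, by simp⟩
  | a :: t, hsort, hw, hh => by
    classical
    set s := (shelfSplit w (1 - w a) t).1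
    set r := (shelfSplit w (1 - w a) t).2
    have hsr : s ++ r = t := shelfSplit_fst_append_snd _ t
    have hmem : ∀ i, i ∈ a :: t ↔ i ∈ a :: s ∨ i ∈ r := by simp [← hsr, or_assoc]
    have hsort' : ((a :: s) ++ r).Pairwise (fun i j => h j ≤ h i) := by
      rwa [List.cons_append, hsr]
    obtain ⟨hsort_S, hsort_r, hsort_Sr⟩ := List.pairwise_append.mp hsort'
    obtain ⟨H', xr, yr, hH'0, hH'r, hr⟩ := exists_isStripPacking_le_nfdhBound r hsort_r
      (fun i hi => hw i ((hmem i).mpr (Or.inr hi)))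
      (fun i hi => hh i ((hmem i).mpr (Or.inr hi)))
    have hwa := hw a List.mem_cons_self
    have hwS : ∀ i ∈ a :: s, 0 ≤ w i := fun i hi => (hw i ((hmem i).mpr (Or.inl hi))).1
    obtain ⟨xS, hS⟩ := exists_isStripPacking_shelf (H := h a) hwS
      (by
        have := sum_shelfSplit_fst_le (w := w) (sub_nonneg.mpr hwa.2) t
        simp only [List.map_cons, List.sum_cons]
        linarith)
      (fun i hi => (List.mem_cons.mp hi).elim (fun hia => hia ▸ le_rfl)
        ((List.pairwise_cons.mp hsort_S).1 i))
    have hover : ∀ b ∈ r.head?, h b ≤ area w h (a :: s) + w b * h b := by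
      intro b hb
      have hbr : b ∈ r := List.mem_of_mem_head? hb
      refine le_area_add_of_one_le (fun i hi => ⟨hwS i hi, hsort_Sr i hi b hbr⟩)
        (hh b ((hmem b).mpr (Or.inr hbr))) ?_
      have := lt_sum_shelfSplit_fst_add hb
      simp only [List.map_cons, List.sum_cons]
      linarith
    have hha := hh a List.mem_cons_self
    have hpack := hS.union hr hha hH'0
    rw [← show {i | i ∈ a :: t} = {i | i ∈ a :: s} ∪ {i | i ∈ r} from Set.ext hmem]
      at hpack
    refine ⟨h a + H', _, _, by positivity, ?_, hpack⟩
    rw [← hsr]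
    exact (add_le_add_right hH'r _).trans <| add_nfdhBound_le
      (fun i hi => mul_nonneg (hwS i hi) (hh i ((hmem i).mpr (Or.inl hi)))) hover
termination_by L => L.length
decreasing_by simpa using Nat.lt_succ_of_le (length_shelfSplit_snd_le _ t)

end NFDH

/-- NFDH strip packing bound: rectangles of width at most 1 can be packed into
a strip of width 1 and height at most `2·a(I) + max h`. -/
theorem stmt_3 {ι : Type*} (I : Finset ι) (hne : I.Nonempty)
    (w h : ι → ℝ)
    (hw : ∀ i ∈ I, w i ∈ Set.Ioc (0:ℝ) 1)
    (hh : ∀ i ∈ I, 0 < h i) :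
    ∃ (H : ℝ) (x y : ι → ℝ),
      H ≤ 2 * ∑ i ∈ I, w i * h i + I.sup' hne h ∧
      (∀ i ∈ I, 0 ≤ x i ∧ x i + w i ≤ 1 ∧ 0 ≤ y i ∧ y i + h i ≤ H) ∧
      (∀ i ∈ I, ∀ j ∈ I, i ≠ j →
        Disjoint (Set.Ioo (x i) (x i + w i) ×ˢ Set.Ioo (y i) (y i + h i))
                 (Set.Ioo (x j) (x j + w j) ×ˢ Set.Ioo (y j) (y j + h j))) := by
  let R : ι → ι → Prop := fun i j => h j ≤ h i
  have : Std.Total R := ⟨fun i j => le_total (h j) (h i)⟩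
  have : IsTrans ι R := ⟨fun _ _ _ hij hjk => hjk.trans hij⟩
  set L := I.toList.insertionSort R
  have hperm : L.Perm I.toList := List.perm_insertionSort R _
  have hmem : ∀ {i}, i ∈ L ↔ i ∈ I := by simp [hperm.mem_iff]
  obtain ⟨H, x, y, -, hHL, hpack⟩ := NFDH.exists_isStripPacking_le_nfdhBound L
    (List.pairwise_insertionSort R _)
    (fun i hi => ⟨(hw i (hmem.mp hi)).1.le, (hw i (hmem.mp hi)).2⟩)
    (fun i hi => (hh i (hmem.mp hi)).le)
  obtain ⟨a, t, hL⟩ :=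
    List.exists_cons_of_ne_nil (List.ne_nil_of_mem (hmem.mpr hne.choose_spec))
  have ha : a ∈ I := hmem.mp (hL ▸ List.mem_cons_self)
  have harea : NFDH.area w h L = ∑ i ∈ I, w i * h i := by
    rw [NFDH.area, (hperm.map _).sum_eq, Finset.sum_map_toList]
  refine ⟨H, x, y, ?_, fun i hi => hpack.mem_strip i (hmem.mpr hi),
    fun i hi j hj hij => hpack.pairwiseDisjoint (hmem.mpr hi) (hmem.mpr hj) hij⟩
  calc H ≤ NFDH.nfdhBound w h L := hHL
    _ ≤ 2 * NFDH.area w h L + h a :=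
      hL ▸ NFDH.nfdhBound_cons_le (mul_pos (hw a ha).1 (hh a ha)).le
    _ ≤ 2 * ∑ i ∈ I, w i * h i + I.sup' hne h := by rw [harea]; gcongr; exact I.le_sup' h ha
end

section
/- (Splitting to create slack) Let D ⊆ [d], let δ ≤ 1/4, and let I be a finite set of items where each item i has weights v_j(i) ∈ [0,1] for j ∈ D, with v_j(I) := Σ_{i∈I} v_j(i) ≤ V_j for each j ∈ D. Then I can be partitioned into at most |D| + 1 subsets such that each subset I' satisfies either |I'| = 1 or v_j(I') ≤ (1−δ)V_j for all j ∈ D. -/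
/-!
Dimensions with an item of weight at least `δ V_j` are handled by making one such item per
dimension a singleton part: removing it leaves weight at most `(1 - δ) V_j` in that dimension,
and this persists in every subset of the remaining items. In the remaining dimensions all items
are smaller than `δ V_j`, and the rest is split greedily by cutting off maximal parts of weight at
most `(1 - δ) V_j` in each of them. Maximality means that one more small item would overflow some
dimension `j`, so the part cut off weighs more than `(1 - 2δ) V_j` there, and what is left weighs
less than `2δ V_j ≤ (1 - 2δ) V_j` (as `δ ≤ 1/4`). Thus every cut permanently drops one dimension
from the set of those exceeding `(1 - 2δ) V_j`, so there is at most one cut per such dimension,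
plus a final part.
-/

open Finset

namespace Finpartition

variable {α : Type*} [DecidableEq α] {s t : Finset α}

def disjUnion (P : Finpartition s) (Q : Finpartition t) (h : Disjoint s t) :
    Finpartition (s ∪ t) where
  parts := P.parts ∪ Q.parts
  supIndep := by
    rw [supIndep_iff_pairwiseDisjoint, coe_union, Set.pairwiseDisjoint_union]
    exact ⟨P.disjoint, Q.disjoint, fun a ha b hb _ ↦ h.mono (P.le ha) (Q.le hb)⟩
  sup_parts := by rw [sup_union, P.sup_parts, Q.sup_parts, sup_eq_union]
  bot_notMem := by simp

end Finpartition

namespace Finset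

lemma exists_subset_card_le_forall_exists_mem {κ ι : Type*} [DecidableEq ι]
    (A : Finset κ) (I : Finset ι) (p : κ → ι → Prop) (h : ∀ j ∈ A, ∃ i ∈ I, p j i) :
    ∃ R ⊆ I, #R ≤ #A ∧ ∀ j ∈ A, ∃ i ∈ R, p j i := by
  choose f hfI hfp using fun j : A ↦ h j j.2
  refine ⟨A.attach.image f, ?_, card_image_le.trans (card_attach ..).le, ?_⟩
  · simpa [image_subset_iff] using hfI
  · exact fun j hj ↦ ⟨f ⟨j, hj⟩, mem_image_of_mem f (mem_attach _ _), hfp ⟨j, hj⟩⟩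

lemma sum_le_sum_sub_of_subset_of_notMem {ι M : Type*} [DecidableEq ι] [AddCommGroup M]
    [PartialOrder M] [IsOrderedAddMonoid M] {S I : Finset ι} {f : ι → M} {r : ι}
    (hSI : S ⊆ I) (hr : r ∈ I) (hrS : r ∉ S) (hf : ∀ i ∈ I, 0 ≤ f i) :
    ∑ i ∈ S, f i ≤ ∑ i ∈ I, f i - f r :=
  calc ∑ i ∈ S, f i ≤ ∑ i ∈ I.erase r, f i :=
        sum_le_sum_of_subset_of_nonneg (subset_erase.2 ⟨hSI, hrS⟩)
          fun i hi _ ↦ hf i (mem_of_mem_erase hi)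
    _ = ∑ i ∈ I, f i - f r := sum_erase_eq_sub hr

end Finset

section SplitBySlack

variable {κ ι : Type*} {B : Finset κ} {v : κ → ι → ℝ} {V : κ → ℝ} {δ : ℝ}

lemma exists_subset_sum_le_and_exists_sum_gt {S : Finset ι} (hδ : δ ≤ 1)
    (hV : ∀ j ∈ B, 0 ≤ V j) (hsmall : ∀ j ∈ B, ∀ i ∈ S, v j i < δ * V j)
    (hS : ∃ j ∈ B, (1 - δ) * V j < ∑ i ∈ S, v j i) :
    ∃ T ⊆ S, (∀ j ∈ B, ∑ i ∈ T, v j i ≤ (1 - δ) * V j) ∧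
      ∃ j ∈ B, (1 - 2 * δ) * V j < ∑ i ∈ T, v j i := by
  classical
  set F := {T ∈ S.powerset | ∀ j ∈ B, ∑ i ∈ T, v j i ≤ (1 - δ) * V j}
  have hF : ∅ ∈ F := by
    simpa [F] using fun j hj ↦ mul_nonneg (by linarith) (hV j hj)
  obtain ⟨T, hTF, hTmax⟩ := F.exists_maximal ⟨∅, hF⟩
  obtain ⟨hTS, hT⟩ : T ⊆ S ∧ ∀ j ∈ B, ∑ i ∈ T, v j i ≤ (1 - δ) * V j := by
    simpa [F] using hTF
  obtain ⟨i₀, hi₀S, hi₀T⟩ : ∃ i₀ ∈ S, i₀ ∉ T := by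
    by_contra! h
    obtain ⟨j, hj, hjS⟩ := hS
    exact (hT j hj).not_gt (by rwa [Subset.antisymm hTS h])
  have hinsert : insert i₀ T ∉ F := fun hmem ↦
    hi₀T (hTmax hmem (subset_insert i₀ T) (mem_insert_self i₀ T))
  obtain ⟨j, hj, hjT⟩ : ∃ j ∈ B, (1 - δ) * V j < ∑ i ∈ insert i₀ T, v j i := by
    by_contra! h
    exact hinsert (by simpa [F, insert_subset_iff, hi₀S, hTS] using h)
  rw [sum_insert hi₀T] at hjT
  exact ⟨T, hTS, hT, j, hj, by linarith [hsmall j hj i₀ hi₀S]⟩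

lemma card_filter_lt_sum_sdiff_lt [DecidableEq ι] {S T : Finset ι} {j₁ : κ} (hδ : δ ≤ 1 / 4)
    (hTS : T ⊆ S) (h0 : ∀ j ∈ B, ∀ i ∈ S, 0 ≤ v j i) (htot : ∀ j ∈ B, ∑ i ∈ S, v j i ≤ V j)
    (hj₁ : j₁ ∈ B) (hj₁T : (1 - 2 * δ) * V j₁ < ∑ i ∈ T, v j₁ i) :
    #{j ∈ B | (1 - 2 * δ) * V j < ∑ i ∈ S \ T, v j i} <
      #{j ∈ B | (1 - 2 * δ) * V j < ∑ i ∈ S, v j i} := by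
  have hmono : ∀ j ∈ B, ∀ U ⊆ S, ∑ i ∈ U, v j i ≤ ∑ i ∈ S, v j i := fun j hj U hU ↦
    sum_le_sum_of_subset_of_nonneg hU fun i hi _ ↦ h0 j hj i hi
  have hsub : {j ∈ B | (1 - 2 * δ) * V j < ∑ i ∈ S \ T, v j i} ⊆
      {j ∈ B | (1 - 2 * δ) * V j < ∑ i ∈ S, v j i} := fun j hj ↦ by
    rw [mem_filter] at hj ⊢
    exact ⟨hj.1, hj.2.trans_le (hmono j hj.1 _ sdiff_subset)⟩
  have hV : 0 ≤ V j₁ := (sum_nonneg (h0 j₁ hj₁)).trans (htot j₁ hj₁)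
  have hj₁S : ¬(1 - 2 * δ) * V j₁ < ∑ i ∈ S \ T, v j₁ i := by
    nlinarith [sum_sdiff hTS (f := v j₁), htot j₁ hj₁]
  refine card_lt_card <| (ssubset_iff_of_subset hsub).2
    ⟨j₁, mem_filter.2 ⟨hj₁, hj₁T.trans_le (hmono j₁ hj₁ T hTS)⟩, fun h ↦ hj₁S (mem_filter.1 h).2⟩

theorem exists_finpartition_sum_le_of_forall_lt [DecidableEq ι] (hδ : δ ≤ 1 / 4)
    (S : Finset ι) (h0 : ∀ j ∈ B, ∀ i ∈ S, 0 ≤ v j i)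
    (hsmall : ∀ j ∈ B, ∀ i ∈ S, v j i < δ * V j) (htot : ∀ j ∈ B, ∑ i ∈ S, v j i ≤ V j) :
    ∃ P : Finpartition S, (∀ T ∈ P.parts, ∀ j ∈ B, ∑ i ∈ T, v j i ≤ (1 - δ) * V j) ∧
      #P.parts ≤ #{j ∈ B | (1 - 2 * δ) * V j < ∑ i ∈ S, v j i} + 1 := by
  induction S using Finset.strongInduction with
  | H S ih =>
  by_cases hlight : ∀ j ∈ B, ∑ i ∈ S, v j i ≤ (1 - δ) * V j
  · refine ⟨⊤, fun T hT ↦ ?_, (card_le_card (Finpartition.parts_top_subset S)).trans (by simp)⟩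
    rwa [mem_singleton.1 (Finpartition.parts_top_subset S hT)]
  push Not at hlight
  have hV : ∀ j ∈ B, 0 ≤ V j := fun j hj ↦ (sum_nonneg (h0 j hj)).trans (htot j hj)
  obtain ⟨T, hTS, hT, j₁, hj₁, hj₁T⟩ :=
    exists_subset_sum_le_and_exists_sum_gt (by linarith) hV hsmall hlight
  have hTne : T.Nonempty := nonempty_iff_ne_empty.2 fun hT ↦ by
    subst hT
    nlinarith [hV j₁ hj₁, sum_empty (f := v j₁)]
  obtain ⟨P, hPlight, hPcard⟩ := ih (S \ T) (sdiff_ssubset hTS hTne)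
    (fun j hj i hi ↦ h0 j hj i (sdiff_subset hi)) (fun j hj i hi ↦ hsmall j hj i (sdiff_subset hi))
    (fun j hj ↦ (sum_le_sum_of_subset_of_nonneg sdiff_subset
      fun i hi _ ↦ h0 j hj i hi).trans (htot j hj))
  refine ⟨P.extend hTne.ne_empty disjoint_sdiff_self_left (sdiff_union_of_subset hTS),
    fun U hU ↦ ?_, ?_⟩
  · rcases mem_insert.1 hU with rfl | hU
    exacts [hT, hPlight U hU]
  · have := card_filter_lt_sum_sdiff_lt hδ hTS h0 htot hj₁ hj₁T
    rw [Finpartition.card_extend]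
    omega

lemma exists_subset_card_le_sum_sdiff_le [DecidableEq ι] {I : Finset ι}
    (h0 : ∀ j ∈ B, ∀ i ∈ I, 0 ≤ v j i) (htot : ∀ j ∈ B, ∑ i ∈ I, v j i ≤ V j) :
    ∃ R ⊆ I, #R ≤ #{j ∈ B | ∃ i ∈ I, δ * V j ≤ v j i} ∧
      ∀ j ∈ B, (∃ i ∈ I, δ * V j ≤ v j i) → ∑ i ∈ I \ R, v j i ≤ (1 - δ) * V j := by
  obtain ⟨R, hRI, hRcard, hR⟩ := exists_subset_card_le_forall_exists_mem _ I
    (fun j i ↦ δ * V j ≤ v j i) fun j hj ↦ (mem_filter.1 hj).2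
  refine ⟨R, hRI, hRcard, fun j hj hheavy ↦ ?_⟩
  obtain ⟨r, hrR, hr⟩ := hR j (mem_filter.2 ⟨hj, hheavy⟩)
  calc ∑ i ∈ I \ R, v j i ≤ ∑ i ∈ I, v j i - v j r :=
        sum_le_sum_sub_of_subset_of_notMem sdiff_subset (hRI hrR)
          (fun h ↦ (mem_sdiff.1 h).2 hrR) (h0 j hj)
    _ ≤ (1 - δ) * V j := by linarith [htot j hj]

theorem exists_finpartition_card_le_and_sum_le [DecidableEq ι] (hδ : δ ≤ 1 / 4) (I : Finset ι)
    (h0 : ∀ j ∈ B, ∀ i ∈ I, 0 ≤ v j i) (htot : ∀ j ∈ B, ∑ i ∈ I, v j i ≤ V j) :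
    ∃ P : Finpartition I, #P.parts ≤ #B + 1 ∧
      ∀ S ∈ P.parts, #S = 1 ∨ ∀ j ∈ B, ∑ i ∈ S, v j i ≤ (1 - δ) * V j := by
  obtain ⟨R, hRI, hRcard, hR⟩ := exists_subset_card_le_sum_sdiff_le (δ := δ) h0 htot
  have hsub : ∀ j ∈ B, ∀ S ⊆ I \ R, ∑ i ∈ S, v j i ≤ ∑ i ∈ I \ R, v j i := fun j hj S hS ↦
    sum_le_sum_of_subset_of_nonneg hS fun i hi _ ↦ h0 j hj i (sdiff_subset hi)
  obtain ⟨P, hPlight, hPcard⟩ :=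
    exists_finpartition_sum_le_of_forall_lt (B := {j ∈ B | ¬∃ i ∈ I, δ * V j ≤ v j i}) hδ (I \ R)
      (fun j hj i hi ↦ h0 j (mem_filter.1 hj).1 i (sdiff_subset hi))
      (fun j hj i hi ↦ not_le.1 fun h ↦ (mem_filter.1 hj).2 ⟨i, sdiff_subset hi, h⟩)
      (fun j hj ↦ (hsub j (mem_filter.1 hj).1 _ Subset.rfl).trans <|
        (sum_le_sum_of_subset_of_nonneg sdiff_subset fun i hi _ ↦
          h0 j (mem_filter.1 hj).1 i hi).trans (htot j (mem_filter.1 hj).1))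
  refine ⟨(P.disjUnion ⊥ disjoint_sdiff_self_left).copy (sdiff_union_of_subset hRI), ?_, ?_⟩
  · have := card_union_le P.parts (⊥ : Finpartition R).parts
    have := card_le_card (filter_subset (fun j ↦ (1 - 2 * δ) * V j < ∑ i ∈ I \ R, v j i)
      {j ∈ B | ¬∃ i ∈ I, δ * V j ≤ v j i})
    have := card_filter_add_card_filter_not (s := B) fun j ↦ ∃ i ∈ I, δ * V j ≤ v j i
    simp only [Finpartition.copy_parts, Finpartition.disjUnion, Finpartition.card_bot] at *
    omega
  intro S hS
  rcases mem_union.1 hS with hS | hS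
  · exact .inr fun j hj ↦ if hheavy : ∃ i ∈ I, δ * V j ≤ v j i then
      (hsub j hj S (P.le hS)).trans (hR j hj hheavy)
    else hPlight S hS j (mem_filter.2 ⟨hj, hheavy⟩)
  · obtain ⟨i, -, rfl⟩ := Finpartition.mem_bot_iff.1 hS
    exact .inl (card_singleton i)

end SplitBySlack

theorem stmt_9_general {ι : Type*} [DecidableEq ι] (d : ℕ) (D : Finset (Fin d))
    (δ : ℝ) (hδ : δ ≤ 1/4)
    (I : Finset ι) (v : Fin d → ι → ℝ) (V : Fin d → ℝ)
    (hv : ∀ j ∈ D, ∀ i ∈ I, v j i ∈ Set.Icc (0:ℝ) 1)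
    (htot : ∀ j ∈ D, ∑ i ∈ I, v j i ≤ V j) :
    ∃ P : Finset (Finset ι),
      P.card ≤ D.card + 1 ∧
      (∀ S ∈ P, S ⊆ I) ∧
      (∀ i ∈ I, ∃ S ∈ P, i ∈ S) ∧
      ((P : Set (Finset ι)).PairwiseDisjoint id) ∧
      (∀ S ∈ P, S.card = 1 ∨ ∀ j ∈ D, ∑ i ∈ S, v j i ≤ (1 - δ) * V j) := by
  obtain ⟨P, hcard, hparts⟩ :=
    exists_finpartition_card_le_and_sum_le hδ I (fun j hj i hi ↦ (hv j hj i hi).1) htot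
  exact ⟨P.parts, hcard, fun S hS ↦ P.le hS, fun i hi ↦ P.exists_mem hi, P.disjoint, hparts⟩

/-- Splitting to create slack: items with weights bounded by capacities `V_j` over
dimensions `D` can be partitioned into at most `|D|+1` parts, each of which is a
singleton or has weight at most `(1−δ)V_j` in every dimension of `D`. -/
theorem stmt_9 {ι : Type*} [DecidableEq ι] (d : ℕ) (D : Finset (Fin d))
    (δ : ℝ) (hδ0 : 0 < δ) (hδ : δ ≤ 1/4)
    (I : Finset ι) (v : Fin d → ι → ℝ) (V : Fin d → ℝ)
    (hV : ∀ j ∈ D, 0 < V j)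
    (hv : ∀ j ∈ D, ∀ i ∈ I, v j i ∈ Set.Icc (0:ℝ) 1)
    (htot : ∀ j ∈ D, ∑ i ∈ I, v j i ≤ V j) :
    ∃ P : Finset (Finset ι),
      P.card ≤ D.card + 1 ∧
      (∀ S ∈ P, S ⊆ I) ∧
      (∀ i ∈ I, ∃ S ∈ P, i ∈ S) ∧
      ((P : Set (Finset ι)).PairwiseDisjoint id) ∧
      (∀ S ∈ P, S.card = 1 ∨ ∀ j ∈ D, ∑ i ∈ S, v j i ≤ (1 - δ) * V j) :=
  stmt_9_general d D δ hδ I v V hv htot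
end

section
/- Let B = [0,1]^2 be a bin containing a set I of pairwise non-overlapping axis-parallel rectangles. Then the empty space B \ I can be partitioned into at most 3|I| + 1 axis-parallel rectangles, using only horizontal cuts (obtained by extending the top and bottom edges of each rectangle of I leftwards and rightwards until they hit another rectangle or the bin boundary). -/
/-!
Cut the bin horizontally at every level `y1 i`, `y2 i`. In the slab just above a level the free
space consists of maximal free intervals (gaps) between the rectangles crossing the slab, and a
gap persisting through consecutive slabs is merged into one cell; these cells partition the free
space. A cell whose gap differs from the slab below is bounded on the left or on the right by a
rectangle starting at its bottom level, or meets from above a rectangle ending there. Charging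
the cell to such a rectangle (preferring the first two kinds) charges every rectangle at most once
per kind, the third kind because the rectangles do not overlap; only the bottom-left cell is left
uncharged, so there are at most `3|I| + 1` cells.
-/

open Set

namespace Finset

variable {α : Type*} [LinearOrder α] {s : Finset α} {p : α → Prop}

theorem exists_greatest (h : ∃ a ∈ s, p a) : ∃ a ∈ s, p a ∧ ∀ b ∈ s, p b → b ≤ a := by
  obtain ⟨a, ha, hpa⟩ := h
  obtain ⟨m, ⟨hm, hpm⟩, hmax⟩ := Set.exists_max_image {b | b ∈ s ∧ p b} id
    (s.finite_toSet.subset fun _ hb => hb.1) ⟨a, ha, hpa⟩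
  exact ⟨m, hm, hpm, fun b hb hpb => hmax b ⟨hb, hpb⟩⟩

theorem exists_least (h : ∃ a ∈ s, p a) : ∃ a ∈ s, p a ∧ ∀ b ∈ s, p b → a ≤ b := by
  obtain ⟨a, ha, hpa⟩ := h
  obtain ⟨m, ⟨hm, hpm⟩, hmin⟩ := Set.exists_min_image {b | b ∈ s ∧ p b} id
    (s.finite_toSet.subset fun _ hb => hb.1) ⟨a, ha, hpa⟩
  exact ⟨m, hm, hpm, fun b hb hpb => hmin b ⟨hb, hpb⟩⟩

end Finset

section Gap

variable {κ : Type*} {J J' : Finset κ} {l r : κ → ℝ} {a b a' b' x : ℝ}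

structure IsGap (J : Finset κ) (l r : κ → ℝ) (a b : ℝ) : Prop where
  nonneg : 0 ≤ a
  lt : a < b
  le_one : b ≤ 1
  disjoint : ∀ i ∈ J, Disjoint (Ioo a b) (Ioo (l i) (r i))
  left : a = 0 ∨ ∃ i ∈ J, r i = a
  right : b = 1 ∨ ∃ i ∈ J, l i = b

theorem IsGap.right_le (hJ : ∀ i ∈ J, l i < r i) (h : IsGap J l r a b)
    (h' : IsGap J l r a' b') (hlt : a' < b) : b' ≤ b := by
  by_contra! hbb
  obtain rfl | ⟨i, hi, rfl⟩ := h.right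
  · linarith [h'.le_one]
  · have hd := h'.disjoint i hi
    rw [Ioo_disjoint_Ioo, max_eq_right hlt.le] at hd
    exact (lt_min hbb (hJ i hi)).not_ge hd

theorem IsGap.le_left (hJ : ∀ i ∈ J, l i < r i) (h : IsGap J l r a b)
    (h' : IsGap J l r a' b') (hlt : a < b') : a ≤ a' := by
  by_contra! haa
  obtain rfl | ⟨i, hi, rfl⟩ := h.left
  · linarith [h'.nonneg]
  · have hd := h'.disjoint i hi
    rw [Ioo_disjoint_Ioo, min_eq_right hlt.le] at hd
    exact (max_lt haa (hJ i hi)).not_ge hd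

theorem IsGap.eq_of_lt (hJ : ∀ i ∈ J, l i < r i) (h : IsGap J l r a b)
    (h' : IsGap J l r a' b') (h₁ : a' < b) (h₂ : a < b') : a = a' ∧ b = b' :=
  ⟨(h.le_left hJ h' h₂).antisymm (h'.le_left hJ h h₁),
    (h'.right_le hJ h h₂).antisymm (h.right_le hJ h' h₁)⟩

theorem exists_isGap_of_notMem (hJ : ∀ i ∈ J, l i < r i) (hx : x ∈ Icc (0 : ℝ) 1)
    (hxJ : ∀ i ∈ J, x ∉ Icc (l i) (r i)) : ∃ a b, IsGap J l r a b ∧ x ∈ Icc a b := by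
  obtain ⟨a, ha, hax, hamax⟩ :=
    (insert 0 (J.image r)).exists_greatest (p := (· ≤ x)) ⟨0, by simp, hx.1⟩
  obtain ⟨b, hb, hxb, hbmin⟩ :=
    (insert 1 (J.image l)).exists_least (p := (x ≤ ·)) ⟨1, by simp, hx.2⟩
  simp only [Finset.mem_insert, Finset.mem_image] at ha hb
  refine ⟨a, b, ⟨hamax 0 (by simp) hx.1, ?_, hbmin 1 (by simp) hx.2, fun i hi => ?_, ha, hb⟩,
    hax, hxb⟩
  · refine (hax.trans hxb).lt_of_ne fun hab => ?_
    rcases ha with ha | ⟨i, hi, hia⟩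
    · rcases hb with hb | ⟨j, hj, hjb⟩
      · linarith
      · exact hxJ j hj ⟨by linarith, by linarith [hJ j hj]⟩
    · exact hxJ i hi ⟨by linarith [hJ i hi], by linarith⟩
  · rw [Ioo_disjoint_Ioo]
    rcases not_and_or.1 (hxJ i hi) with hxl | hrx
    · have hbl : b ≤ l i := hbmin (l i) (Finset.mem_insert_of_mem (Finset.mem_image_of_mem l hi)) (not_le.1 hxl).le
      exact (min_le_left _ _).trans (hbl.trans (le_max_right _ _))
    · have hra : r i ≤ a := hamax (r i) (Finset.mem_insert_of_mem (Finset.mem_image_of_mem r hi)) (not_le.1 hrx).le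
      exact (min_le_right _ _).trans (hra.trans (le_max_left _ _))

theorem IsGap.exists_of_not_isGap (h : IsGap J l r a b) (h' : ¬ IsGap J' l r a b) :
    (∃ i ∈ J', i ∉ J ∧ ¬ Disjoint (Ioo a b) (Ioo (l i) (r i))) ∨
      (∃ i ∈ J, i ∉ J' ∧ r i = a) ∨ (∃ i ∈ J, i ∉ J' ∧ l i = b) := by
  by_contra! hc
  obtain ⟨hd, hl, hr⟩ := hc
  refine h' ⟨h.nonneg, h.lt, h.le_one, fun i hi => ?_, ?_, ?_⟩
  · by_cases hiJ : i ∈ J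
    · exact h.disjoint i hiJ
    · exact hd i hi hiJ
  · refine h.left.imp_right fun ⟨i, hi, hia⟩ => ⟨i, ?_, hia⟩
    by_contra hi'
    exact hl i hi hi' hia
  · refine h.right.imp_right fun ⟨i, hi, hib⟩ => ⟨i, ?_, hib⟩
    by_contra hi'
    exact hr i hi hi' hib

end Gap

section Run

variable {T : Finset ℝ} {P : ℝ → Prop} {s e s' e' u : ℝ}

/-- `starts` says that `P` fails at the level of `T` just below `s`, without naming that level. -/
structure IsRun (T : Finset ℝ) (P : ℝ → Prop) (s e : ℝ) : Prop where
  start_mem : s ∈ T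
  end_mem : e ∈ T
  lt : s < e
  holds : ∀ w ∈ T, s ≤ w → w < e → P w
  stops : e = 1 ∨ ¬ P e
  starts : ∀ v ∈ T, v < s → ∃ w ∈ T, v ≤ w ∧ w < s ∧ ¬ P w

theorem IsRun.end_eq (hT : ∀ w ∈ T, w ≤ 1) (h : IsRun T P s e) (h' : IsRun T P s e') :
    e = e' := by
  have hnot : ∀ {e e'}, IsRun T P s e → IsRun T P s e' → ¬ e < e' := fun h h' hlt =>
    h.stops.elim (fun he => by linarith [hT _ h'.end_mem])
      fun hP => hP (h'.holds _ h.end_mem h.lt.le hlt)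
  exact le_antisymm (not_lt.1 (hnot h' h)) (not_lt.1 (hnot h h'))

theorem IsRun.le_start (h : IsRun T P s e) (h' : IsRun T P s' e') (hs' : s' < e) :
    s' ≤ s := by
  by_contra! hss
  obtain ⟨w, hw, hsw, hws, hPw⟩ := h'.starts s h.start_mem hss
  exact hPw (h.holds w hw hsw (hws.trans hs'))

theorem IsRun.start_eq (h : IsRun T P s e) (h' : IsRun T P s' e') (hu : s ≤ u) (hu' : s' ≤ u)
    (he : u < e) (he' : u < e') : s = s' :=
  le_antisymm (h'.le_start h (hu.trans_lt he')) (h.le_start h' (hu'.trans_lt he))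

theorem exists_isRun (h1 : 1 ∈ T) (hu : u ∈ T) (hu1 : u < 1) (hPu : P u) :
    ∃ s e, IsRun T P s e ∧ s ≤ u ∧ u < e := by
  obtain ⟨s, hs, ⟨hsu, hsP⟩, hsmin⟩ :=
    T.exists_least (p := fun v => v ≤ u ∧ ∀ w ∈ T, v ≤ w → w ≤ u → P w)
      ⟨u, hu, le_rfl, fun w _ huw hwu => le_antisymm hwu huw ▸ hPu⟩
  obtain ⟨e, he, ⟨hue, heP⟩, hemin⟩ :=
    T.exists_least (p := fun w => u < w ∧ (w = 1 ∨ ¬ P w)) ⟨1, h1, hu1, Or.inl rfl⟩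
  refine ⟨s, e, ⟨hs, he, hsu.trans_lt hue, fun w hw hsw hwe => ?_, heP, fun v hv hvs => ?_⟩,
    hsu, hue⟩
  · rcases le_or_gt w u with hwu | huw
    · exact hsP w hw hsw hwu
    · by_contra hPw
      exact (hemin w hw ⟨huw, Or.inr hPw⟩).not_gt hwe
  · by_contra! hc
    refine (hsmin v hv ⟨hvs.le.trans hsu, fun w hw hvw hwu => ?_⟩).not_gt hvs
    rcases lt_or_ge w s with hws | hsw
    · exact hc w hw hvw hws
    · exact hsP w hw hsw hwu

end Run

section Cells

variable {ι : Type*} (I : Finset ι) (x1 x2 y1 y2 : ι → ℝ)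

noncomputable def cutLevels : Finset ℝ := insert 0 (insert 1 (I.image y1 ∪ I.image y2))

/-- The rectangles of positive width that block the slab just above the level `t`. -/
noncomputable def activeAt (t : ℝ) : Finset ι :=
  {i ∈ I | y1 i ≤ t ∧ t < y2 i ∧ x1 i < x2 i}

def IsCell (a b s e : ℝ) : Prop :=
  IsRun (cutLevels I y1 y2) (fun t => IsGap (activeAt I x1 x2 y1 y2 t) x1 x2 a b) s e

open Classical in
noncomputable def cells : Finset (ℝ × ℝ × ℝ × ℝ) :=
  {ρ ∈ insert 0 (I.image x2) ×ˢ insert 1 (I.image x1) ×ˢ cutLevels I y1 y2 ×ˢ cutLevels I y1 y2 |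
    IsCell I x1 x2 y1 y2 ρ.1 ρ.2.1 ρ.2.2.1 ρ.2.2.2}

def Charges (a b s : ℝ) : Option (ι ⊕ ι ⊕ ι) → Prop
  | none => s = 0 ∧ a = 0
  | some (.inl i) => i ∈ activeAt I x1 x2 y1 y2 s ∧ y1 i = s ∧ x2 i = a
  | some (.inr (.inl i)) => i ∈ activeAt I x1 x2 y1 y2 s ∧ y1 i = s ∧ x1 i = b
  | some (.inr (.inr i)) => i ∈ I ∧ y1 i < s ∧ y2 i = s ∧
      ¬ Disjoint (Ioo a b) (Ioo (x1 i) (x2 i)) ∧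
      ∀ j ∈ activeAt I x1 x2 y1 y2 s, y1 j = s → x1 j ≠ b

variable {I x1 x2 y1 y2} {i : ι} {a b s e a' b' s' e' p x y : ℝ}

theorem zero_mem_cutLevels : 0 ∈ cutLevels I y1 y2 := by simp [cutLevels]

theorem one_mem_cutLevels : 1 ∈ cutLevels I y1 y2 := by simp [cutLevels]

theorem y1_mem_cutLevels (hi : i ∈ I) : y1 i ∈ cutLevels I y1 y2 := by
  simp [cutLevels, Finset.mem_image_of_mem y1 hi]

theorem y2_mem_cutLevels (hi : i ∈ I) : y2 i ∈ cutLevels I y1 y2 := by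
  simp [cutLevels, Finset.mem_image_of_mem y2 hi]

theorem cutLevels_subset_Icc
    (hin : ∀ i ∈ I, 0 ≤ x1 i ∧ x1 i ≤ x2 i ∧ x2 i ≤ 1 ∧ 0 ≤ y1 i ∧ y1 i ≤ y2 i ∧ y2 i ≤ 1) :
    ↑(cutLevels I y1 y2) ⊆ Icc (0 : ℝ) 1 := by
  intro w hw
  simp only [cutLevels, Finset.coe_insert, Finset.coe_union, Finset.coe_image, mem_insert_iff,
    mem_union, mem_image, Finset.mem_coe] at hw
  obtain rfl | rfl | ⟨i, hi, rfl⟩ | ⟨i, hi, rfl⟩ := hw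
  · simp
  · simp
  · obtain ⟨-, -, -, h0, h12, h1⟩ := hin i hi
    exact ⟨h0, h12.trans h1⟩
  · obtain ⟨-, -, -, h0, h12, h1⟩ := hin i hi
    exact ⟨h0.trans h12, h1⟩

theorem mem_activeAt {t : ℝ} :
    i ∈ activeAt I x1 x2 y1 y2 t ↔ i ∈ I ∧ y1 i ≤ t ∧ t < y2 i ∧ x1 i < x2 i :=
  Finset.mem_filter

theorem lt_of_mem_activeAt {t : ℝ} : ∀ i ∈ activeAt I x1 x2 y1 y2 t, x1 i < x2 i :=
  fun _ hi => (mem_activeAt.1 hi).2.2.2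

theorem y1_eq_of_mem_activeAt_of_notMem (hps : p < s)
    (hp : ∀ w ∈ cutLevels I y1 y2, w < s → w ≤ p) (hi : i ∈ activeAt I x1 x2 y1 y2 s)
    (hi' : i ∉ activeAt I x1 x2 y1 y2 p) : y1 i = s := by
  obtain ⟨hI, h1, h2, h3⟩ := mem_activeAt.1 hi
  exact h1.antisymm <| not_lt.1 fun hlt =>
    hi' (mem_activeAt.2 ⟨hI, hp _ (y1_mem_cutLevels hI) hlt, hps.trans h2, h3⟩)

theorem y2_eq_of_mem_activeAt_of_notMem (hps : p < s)
    (hp : ∀ w ∈ cutLevels I y1 y2, w < s → w ≤ p) (hi : i ∈ activeAt I x1 x2 y1 y2 p)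
    (hi' : i ∉ activeAt I x1 x2 y1 y2 s) : y2 i = s := by
  obtain ⟨hI, h1, h2, h3⟩ := mem_activeAt.1 hi
  refine (not_lt.1 fun hlt => hi' (mem_activeAt.2 ⟨hI, h1.trans hps.le, hlt, h3⟩)).antisymm ?_
  exact not_lt.1 fun hlt => (hp _ (y2_mem_cutLevels hI) hlt).not_gt h2

theorem mem_cells : (a, b, s, e) ∈ cells I x1 x2 y1 y2 ↔ IsCell I x1 x2 y1 y2 a b s e := by
  classical
  refine ⟨fun h => (Finset.mem_filter.1 h).2, fun h => Finset.mem_filter.2 ⟨?_, h⟩⟩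
  have hg := h.holds s h.start_mem le_rfl h.lt
  simp only [Finset.mem_product, Finset.mem_insert, Finset.mem_image]
  refine ⟨hg.left.imp_right ?_, hg.right.imp_right ?_, h.start_mem, h.end_mem⟩ <;>
    exact fun ⟨j, hj, hjx⟩ => ⟨j, (mem_activeAt.1 hj).1, hjx⟩

theorem IsCell.bounds (hT : ↑(cutLevels I y1 y2) ⊆ Icc (0 : ℝ) 1)
    (hc : IsCell I x1 x2 y1 y2 a b s e) :
    0 ≤ a ∧ a ≤ b ∧ b ≤ 1 ∧ 0 ≤ s ∧ s ≤ e ∧ e ≤ 1 := by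
  have hg := hc.holds s hc.start_mem le_rfl hc.lt
  exact ⟨hg.nonneg, hg.lt.le, hg.le_one, (hT hc.start_mem).1, hc.lt.le, (hT hc.end_mem).2⟩

theorem IsCell.eq_of_lt (hT : ↑(cutLevels I y1 y2) ⊆ Icc (0 : ℝ) 1)
    (hc : IsCell I x1 x2 y1 y2 a b s e) (hc' : IsCell I x1 x2 y1 y2 a' b' s e')
    (h₁ : a' < b) (h₂ : a < b') : (a, b, s, e) = (a', b', s, e') := by
  obtain ⟨rfl, rfl⟩ := (hc.holds s hc.start_mem le_rfl hc.lt).eq_of_lt lt_of_mem_activeAt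
    (hc'.holds s hc'.start_mem le_rfl hc'.lt) h₁ h₂
  rw [hc.end_eq (fun w hw => (hT hw).2) hc']

theorem IsCell.disjoint_rect (hc : IsCell I x1 x2 y1 y2 a b s e) (hi : i ∈ I) :
    Disjoint (Ioo a b ×ˢ Ioo s e) (Ioo (x1 i) (x2 i) ×ˢ Ioo (y1 i) (y2 i)) := by
  rw [Set.disjoint_left]
  rintro ⟨x, y⟩ ⟨hx, hy⟩ ⟨hxi, hyi⟩
  obtain ⟨u, hu, huy, humax⟩ :=
    (cutLevels I y1 y2).exists_greatest (p := (· ≤ y)) ⟨s, hc.start_mem, hy.1.le⟩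
  have hg := hc.holds u hu (humax s hc.start_mem hy.1.le) (huy.trans_lt hy.2)
  have hiu : i ∈ activeAt I x1 x2 y1 y2 u := mem_activeAt.2
    ⟨hi, humax _ (y1_mem_cutLevels hi) hyi.1.le, huy.trans_lt hyi.2, hxi.1.trans hxi.2⟩
  exact Set.disjoint_left.1 (hg.disjoint i hiu) hx hxi

theorem IsCell.disjoint (hT : ↑(cutLevels I y1 y2) ⊆ Icc (0 : ℝ) 1)
    (hc : IsCell I x1 x2 y1 y2 a b s e) (hc' : IsCell I x1 x2 y1 y2 a' b' s' e')
    (hne : (a, b, s, e) ≠ (a', b', s', e')) :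
    Disjoint (Ioo a b ×ˢ Ioo s e) (Ioo a' b' ×ˢ Ioo s' e') := by
  rw [Set.disjoint_left]
  rintro ⟨x, y⟩ ⟨hx, hy⟩ ⟨hx', hy'⟩
  obtain ⟨u, hu, huy, humax⟩ :=
    (cutLevels I y1 y2).exists_greatest (p := (· ≤ y)) ⟨s, hc.start_mem, hy.1.le⟩
  have hsu := humax s hc.start_mem hy.1.le
  have hs'u := humax s' hc'.start_mem hy'.1.le
  obtain ⟨rfl, rfl⟩ := (hc.holds u hu hsu (huy.trans_lt hy.2)).eq_of_lt lt_of_mem_activeAt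
    (hc'.holds u hu hs'u (huy.trans_lt hy'.2)) (hx'.1.trans hx.2) (hx.1.trans hx'.2)
  obtain rfl := hc.start_eq hc' hsu hs'u (huy.trans_lt hy.2) (huy.trans_lt hy'.2)
  exact hne (hc.eq_of_lt hT hc' (hx'.1.trans hx.2) (hx.1.trans hx'.2))

theorem exists_cell_of_notMem (hx : x ∈ Icc (0 : ℝ) 1) (hy : y ∈ Icc (0 : ℝ) 1)
    (hxy : ∀ i ∈ I, (x, y) ∉ Icc (x1 i) (x2 i) ×ˢ Icc (y1 i) (y2 i)) :
    ∃ a b s e, IsCell I x1 x2 y1 y2 a b s e ∧ (x, y) ∈ Icc a b ×ˢ Icc s e := by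
  obtain ⟨u, hu, ⟨hu1, huy⟩, humax⟩ := (cutLevels I y1 y2).exists_greatest
    (p := fun w => w < 1 ∧ w ≤ y) ⟨0, zero_mem_cutLevels, one_pos, hy.1⟩
  have above : ∀ w ∈ cutLevels I y1 y2, u < w → y ≤ w := fun w hw huw =>
    not_lt.1 fun hwy => (humax w hw ⟨hwy.trans_le hy.2, hwy.le⟩).not_gt huw
  obtain ⟨a, b, hg, hxab⟩ := exists_isGap_of_notMem lt_of_mem_activeAt hx fun i hi hxi => by
    obtain ⟨hI, h1, h2, -⟩ := mem_activeAt.1 hi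
    exact hxy i hI ⟨hxi, h1.trans huy, above _ (y2_mem_cutLevels hI) h2⟩
  obtain ⟨s, e, hc, hsu, hue⟩ := exists_isRun (P := fun t => IsGap (activeAt I x1 x2 y1 y2 t) x1 x2 a b)
    one_mem_cutLevels hu hu1 hg
  exact ⟨a, b, s, e, hc, hxab, hsu.trans huy, above e hc.end_mem hue⟩

theorem IsGap.exists_starting_right_end
    (hdisj : (I : Set ι).PairwiseDisjoint fun i => Ioo (x1 i) (x2 i) ×ˢ Ioo (y1 i) (y2 i))
    (hg : IsGap (activeAt I x1 x2 y1 y2 s) x1 x2 a b) (hb1 : b < 1) (hi : i ∈ I)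
    (hi1 : y1 i < s) (hi2 : y2 i = s) (hxi1 : x1 i < b) (hxi2 : b < x2 i) :
    ∃ j ∈ activeAt I x1 x2 y1 y2 s, y1 j = s ∧ x1 j = b := by
  obtain rfl | ⟨j, hj, hjb⟩ := hg.right
  · exact absurd hb1 (lt_irrefl 1)
  refine ⟨j, hj, ?_, hjb⟩
  obtain ⟨hjI, hj1, hj2, hjx⟩ := mem_activeAt.1 hj
  refine hj1.antisymm (not_lt.1 fun hlt => ?_)
  have hij : i ≠ j := by
    rintro rfl
    exact hxi1.ne hjb
  have hd := hdisj hi hjI hij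
  rw [Function.onFun, disjoint_prod, Ioo_disjoint_Ioo, Ioo_disjoint_Ioo] at hd
  simp only [min_le_iff, le_max_iff] at hd
  rcases hd with ((h | h) | (h | h)) | ((h | h) | (h | h)) <;> linarith

theorem IsCell.exists_charges (hT : ↑(cutLevels I y1 y2) ⊆ Icc (0 : ℝ) 1)
    (hc : IsCell I x1 x2 y1 y2 a b s e) :
    ∃ c ∈ (I.disjSum (I.disjSum I)).insertNone, Charges I x1 x2 y1 y2 a b s c := by
  have hg := hc.holds s hc.start_mem le_rfl hc.lt
  rcases (hT hc.start_mem).1.eq_or_lt with rfl | hs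
  · rcases hg.left with ha | ⟨i, hi, hia⟩
    · exact ⟨none, by simp, rfl, ha⟩
    · obtain ⟨hI, h1, -⟩ := mem_activeAt.1 hi
      exact ⟨some (.inl i), by simp [hI], hi, h1.antisymm (hT (y1_mem_cutLevels hI)).1, hia⟩
  obtain ⟨p, hp, hps, hpmax⟩ :=
    (cutLevels I y1 y2).exists_greatest (p := (· < s)) ⟨0, zero_mem_cutLevels, hs⟩
  have hgp : ¬ IsGap (activeAt I x1 x2 y1 y2 p) x1 x2 a b := by
    obtain ⟨w, hw, hpw, hws, hgw⟩ := hc.starts p hp hps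
    rwa [(hpmax w hw hws).antisymm hpw] at hgw
  by_cases hright : ∃ j ∈ activeAt I x1 x2 y1 y2 s, y1 j = s ∧ x1 j = b
  · obtain ⟨j, hj, hjs, hjb⟩ := hright
    exact ⟨some (.inr (.inl j)), by simp [(mem_activeAt.1 hj).1], hj, hjs, hjb⟩
  rcases hg.exists_of_not_isGap hgp with
    ⟨i, hip, his, hov⟩ | ⟨i, his, hip, hia⟩ | ⟨i, his, hip, hib⟩
  · obtain ⟨hI, h1, -⟩ := mem_activeAt.1 hip
    exact ⟨some (.inr (.inr i)), by simp [hI], hI, h1.trans_lt hps,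
      y2_eq_of_mem_activeAt_of_notMem hps hpmax hip his, hov,
      fun j hj hjs hjb => hright ⟨j, hj, hjs, hjb⟩⟩
  · exact ⟨some (.inl i), by simp [(mem_activeAt.1 his).1], his,
      y1_eq_of_mem_activeAt_of_notMem hps hpmax his hip, hia⟩
  · exact ⟨some (.inr (.inl i)), by simp [(mem_activeAt.1 his).1], his,
      y1_eq_of_mem_activeAt_of_notMem hps hpmax his hip, hib⟩

theorem IsCell.lt_of_charges_below
    (hdisj : (I : Set ι).PairwiseDisjoint fun i => Ioo (x1 i) (x2 i) ×ˢ Ioo (y1 i) (y2 i))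
    (hc : IsCell I x1 x2 y1 y2 a b s e) (hc' : IsCell I x1 x2 y1 y2 a' b' s e')
    (h : Charges I x1 x2 y1 y2 a b s (some (.inr (.inr i))))
    (h' : Charges I x1 x2 y1 y2 a' b' s (some (.inr (.inr i)))) : a' < b := by
  by_contra! hba
  obtain ⟨hi, hi1, hi2, hov, hright⟩ := h
  have hov' := h'.2.2.2.1
  simp only [Ioo_disjoint_Ioo, not_le, max_lt_iff, lt_min_iff] at hov hov'
  have hg' := hc'.holds s hc'.start_mem le_rfl hc'.lt
  obtain ⟨j, hj, hjs, hjb⟩ := (hc.holds s hc.start_mem le_rfl hc.lt).exists_starting_right_end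
    hdisj (by linarith [hg'.lt, hg'.le_one]) hi hi1 hi2 hov.1.2 (hba.trans_lt hov'.2.1)
  exact hright j hj hjs hjb

theorem charges_subsingleton (hT : ↑(cutLevels I y1 y2) ⊆ Icc (0 : ℝ) 1)
    (hdisj : (I : Set ι).PairwiseDisjoint fun i => Ioo (x1 i) (x2 i) ×ˢ Ioo (y1 i) (y2 i))
    (c : Option (ι ⊕ ι ⊕ ι)) :
    {ρ ∈ (cells I x1 x2 y1 y2 : Set (ℝ × ℝ × ℝ × ℝ)) |
      Charges I x1 x2 y1 y2 ρ.1 ρ.2.1 ρ.2.2.1 c}.Subsingleton := by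
  rintro ⟨a, b, s, e⟩ ⟨hc, hch⟩ ⟨a', b', s', e'⟩ ⟨hc', hch'⟩
  rw [Finset.mem_coe, mem_cells] at hc hc'
  have hlt := (hc.holds s hc.start_mem le_rfl hc.lt).lt
  have hlt' := (hc'.holds s' hc'.start_mem le_rfl hc'.lt).lt
  rcases c with _ | i | i | i
  · obtain ⟨rfl, rfl⟩ := hch
    obtain ⟨rfl, rfl⟩ := hch'
    exact hc.eq_of_lt hT hc' hlt hlt'
  · obtain ⟨-, rfl, rfl⟩ := hch
    obtain ⟨-, rfl, rfl⟩ := hch'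
    exact hc.eq_of_lt hT hc' hlt hlt'
  · obtain ⟨-, rfl, rfl⟩ := hch
    obtain ⟨-, rfl, rfl⟩ := hch'
    exact hc.eq_of_lt hT hc' hlt' hlt
  · obtain rfl : s = s' := hch.2.2.1.symm.trans hch'.2.2.1
    exact hc.eq_of_lt hT hc' (hc.lt_of_charges_below hdisj hc' hch hch')
      (hc'.lt_of_charges_below hdisj hc hch' hch)

theorem card_cells_le (hT : ↑(cutLevels I y1 y2) ⊆ Icc (0 : ℝ) 1)
    (hdisj : (I : Set ι).PairwiseDisjoint fun i => Ioo (x1 i) (x2 i) ×ˢ Ioo (y1 i) (y2 i)) :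
    (cells I x1 x2 y1 y2).card ≤ 3 * I.card + 1 := by
  calc (cells I x1 x2 y1 y2).card ≤ (I.disjSum (I.disjSum I)).insertNone.card :=
        Finset.card_le_card_of_forall_subsingleton
          (fun ρ c => Charges I x1 x2 y1 y2 ρ.1 ρ.2.1 ρ.2.2.1 c)
          (fun ⟨_, _, _, _⟩ h => (mem_cells.1 h).exists_charges hT)
          (fun c _ => charges_subsingleton hT hdisj c)
    _ = 3 * I.card + 1 := by simp only [Finset.card_insertNone, Finset.card_disjSum]; ring

end Cells

/-- The empty space of a unit bin containing non-overlapping rectangles `I`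
can be partitioned into at most `3|I|+1` axis-parallel rectangles. -/
theorem stmt_11 {ι : Type*} (I : Finset ι)
    (x1 x2 y1 y2 : ι → ℝ)
    (hin : ∀ i ∈ I, 0 ≤ x1 i ∧ x1 i ≤ x2 i ∧ x2 i ≤ 1 ∧ 0 ≤ y1 i ∧ y1 i ≤ y2 i ∧ y2 i ≤ 1)
    (hdisj : ∀ i ∈ I, ∀ j ∈ I, i ≠ j →
      Disjoint (Set.Ioo (x1 i) (x2 i) ×ˢ Set.Ioo (y1 i) (y2 i))
               (Set.Ioo (x1 j) (x2 j) ×ˢ Set.Ioo (y1 j) (y2 j))) :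
    ∃ (n : ℕ) (p1 p2 q1 q2 : Fin n → ℝ),
      n ≤ 3 * I.card + 1 ∧
      (∀ k, 0 ≤ p1 k ∧ p1 k ≤ p2 k ∧ p2 k ≤ 1 ∧ 0 ≤ q1 k ∧ q1 k ≤ q2 k ∧ q2 k ≤ 1) ∧
      (∀ k l, k ≠ l →
        Disjoint (Set.Ioo (p1 k) (p2 k) ×ˢ Set.Ioo (q1 k) (q2 k))
                 (Set.Ioo (p1 l) (p2 l) ×ˢ Set.Ioo (q1 l) (q2 l))) ∧
      (∀ k, ∀ i ∈ I,
        Disjoint (Set.Ioo (p1 k) (p2 k) ×ˢ Set.Ioo (q1 k) (q2 k))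
                 (Set.Ioo (x1 i) (x2 i) ×ˢ Set.Ioo (y1 i) (y2 i))) ∧
      (Set.Icc (0:ℝ) 1 ×ˢ Set.Icc (0:ℝ) 1 ⊆
        (⋃ i ∈ I, Set.Icc (x1 i) (x2 i) ×ˢ Set.Icc (y1 i) (y2 i)) ∪
        ⋃ k, Set.Icc (p1 k) (p2 k) ×ˢ Set.Icc (q1 k) (q2 k)) := by
  have hT := cutLevels_subset_Icc hin
  set C := cells I x1 x2 y1 y2
  set ρ : Fin C.card → ℝ × ℝ × ℝ × ℝ := fun k => C.equivFin.symm k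
  have hρ (k : Fin C.card) : IsCell I x1 x2 y1 y2 (ρ k).1 (ρ k).2.1 (ρ k).2.2.1 (ρ k).2.2.2 :=
    mem_cells.1 (C.equivFin.symm k).2
  refine ⟨C.card, fun k => (ρ k).1, fun k => (ρ k).2.1, fun k => (ρ k).2.2.1,
    fun k => (ρ k).2.2.2, card_cells_le hT fun i hi j hj hij => hdisj i hi j hj hij,
    fun k => (hρ k).bounds hT,
    fun k l hkl => (hρ k).disjoint hT (hρ l) fun h => hkl ?_,
    fun k i hi => (hρ k).disjoint_rect hi, ?_⟩
  · exact C.equivFin.symm.injective (Subtype.ext h)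
  rintro ⟨x, y⟩ ⟨hx, hy⟩
  by_cases hxy : ∃ i ∈ I, (x, y) ∈ Icc (x1 i) (x2 i) ×ˢ Icc (y1 i) (y2 i)
  · obtain ⟨i, hi, hmem⟩ := hxy
    exact Or.inl (mem_biUnion hi hmem)
  obtain ⟨a, b, s, e, hc, hmem⟩ :=
    exists_cell_of_notMem hx hy fun i hi hmem => hxy ⟨i, hi, hmem⟩
  refine Or.inr (mem_iUnion.2 ⟨C.equivFin ⟨(a, b, s, e), mem_cells.2 hc⟩, ?_⟩)
  simpa [ρ] using hmem
end

section
/- (Pairing boxes of bounded weight) Let d = 1 and let there be m boxes, each containing only items with individual weight less than 1/2 − 2ε, with each box's total weight between ε and 1/2. Each box can be split into two parts, one with weight in [ε, 1/2 − ε] and the remainder. Then, grouping the m boxes into groups of 3 and recombining split parts, the m boxes' contents can be packed into at most 3 + 2m/3 bins, each of total weight at most 1 − ε. -/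
/-! Lay the `2m` parts out in a row, box by box, and cut the row into consecutive triples; there are
`⌈2m/3⌉ ≤ 3 + 2m/3` triples. Every triple is either a whole box followed by the first part of the next
box, or the second part of a box followed by the whole next box. A whole box weighs at most `1/2` and
each part at most `1/2 - ε` (the second one because the first weighs at least `ε`), so each triple
weighs at most `1 - ε`. -/

open Finset

theorem sum_filter_range_div_eq {M : Type*} [AddCommMonoid M] {n c : ℕ} (hc : 0 < c)
    {a : ℕ → M} (ha : ∀ k, n ≤ k → a k = 0) (t : ℕ) :
    ∑ k ∈ range n with k / c = t, a k = ∑ j ∈ range c, a (c * t + j) := by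
  have hfiber : ∀ k, k / c = t ↔ k ∈ Ico (c * t) (c * t + c) := fun k => by
    rw [Nat.div_eq_iff hc, mem_Ico, mul_comm t c]
    omega
  calc ∑ k ∈ range n with k / c = t, a k = ∑ k ∈ Ico (c * t) (c * t + c), a k := by
        refine sum_subset (fun k hk => (hfiber k).1 (mem_filter.1 hk).2) fun k hk hk' => ha k ?_
        simp only [mem_filter, mem_range, hfiber, hk, and_true, not_lt] at hk'
        exact hk'
    _ = ∑ j ∈ range c, a (c * t + j) := by
        rw [sum_Ico_eq_sum_range, add_tsub_cancel_left]

theorem sum_range_three_le_of_pairs {a : ℕ → ℝ} {x y : ℝ}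
    (hpair : ∀ b, a (2 * b) + a (2 * b + 1) ≤ x) (hsingle : ∀ k, a k ≤ y) (t : ℕ) :
    ∑ j ∈ range 3, a (3 * t + j) ≤ x + y := by
  simp only [sum_range_succ, sum_range_zero, zero_add, add_zero]
  obtain ⟨g, rfl | rfl⟩ := Nat.even_or_odd' t
  · have h := hpair (3 * g)
    have h' := hsingle (2 * (3 * g + 1))
    rw [show 3 * (2 * g) = 2 * (3 * g) by ring]
    rw [show 2 * (3 * g + 1) = 2 * (3 * g) + 2 by ring] at h'
    linarith
  · have h := hpair (3 * g + 2)
    have h' := hsingle (2 * (3 * g + 1) + 1)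
    rw [show 3 * (2 * g + 1) = 2 * (3 * g + 1) + 1 by ring]
    rw [show 2 * (3 * g + 2) = 2 * (3 * g + 1) + 1 + 1 by ring] at h
    linarith

theorem exists_triple_packing {m : ℕ} (w : Fin m × Fin 2 → ℝ) {x y : ℝ} (hx : 0 ≤ x) (hy : 0 ≤ y)
    (hpair : ∀ b, w (b, 0) + w (b, 1) ≤ x) (hsingle : ∀ p, w p ≤ y) :
    ∃ f : Fin m × Fin 2 → Fin ((m * 2 + 2) / 3),
      ∀ t, ∑ p ∈ univ.filter (fun p => f p = t), w p ≤ x + y := by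
  set e : Fin m × Fin 2 ≃ Fin (m * 2) := finProdFinEquiv
  -- the part `(b, i)` sits at position `2 * b + i`; positions past the last part weigh `0`
  let a : ℕ → ℝ := fun k => if h : k < m * 2 then w (e.symm ⟨k, h⟩) else 0
  have ha_e : ∀ p, w p = a (e p) := by simp [a]
  have ha_pair : ∀ b, a (2 * b) + a (2 * b + 1) ≤ x := by
    intro b
    by_cases hb : b < m
    · have h0 := ha_e (⟨b, hb⟩, 0)
      have h1 := ha_e (⟨b, hb⟩, 1)
      simp only [e, finProdFinEquiv_apply_val, Fin.val_zero, Fin.val_one, zero_add,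
        add_comm 1] at h0 h1
      simpa only [← h0, ← h1] using hpair ⟨b, hb⟩
    · simp only [a, dif_neg (show ¬ 2 * b < m * 2 by omega),
        dif_neg (show ¬ 2 * b + 1 < m * 2 by omega)]
      linarith
  have ha_single : ∀ k, a k ≤ y := fun k => by
    unfold a
    split_ifs
    exacts [hsingle _, hy]
  refine ⟨fun p => ⟨e p / 3, by have := (e p).isLt; omega⟩, fun t => ?_⟩
  calc ∑ p with (⟨e p / 3, _⟩ : Fin _) = t, w p
        = ∑ k ∈ range (m * 2) with k / 3 = (t : ℕ), a k := by
          simp only [sum_filter, Fin.ext_iff, ha_e]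
          rw [e.sum_comp (fun k => if (k : ℕ) / 3 = (t : ℕ) then a k else 0),
            Fin.sum_univ_eq_sum_range (fun k => if k / 3 = (t : ℕ) then a k else 0)]
    _ = ∑ j ∈ range 3, a (3 * (t : ℕ) + j) :=
        sum_filter_range_div_eq (by norm_num) (fun k hk => dif_neg (by omega)) t
    _ ≤ x + y := sum_range_three_le_of_pairs ha_pair ha_single t

theorem stmt_19_general (m : ℕ) (ε : ℝ) (hε5 : ε ≤ 1/5)
    (wB s1 s2 : Fin m → ℝ)
    (hwB : ∀ b, ε ≤ wB b ∧ wB b ≤ 1/2)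
    (hsplit : ∀ b, wB b = s1 b + s2 b)
    (hs1 : ∀ b, ε ≤ s1 b ∧ s1 b ≤ 1/2 - ε) :
    ∃ (B : ℕ) (f : Fin m × Fin 2 → Fin B),
      (B : ℝ) ≤ 3 + 2 * (m : ℝ) / 3 ∧
      ∀ t : Fin B,
        (∑ p ∈ Finset.univ.filter (fun p : Fin m × Fin 2 => f p = t),
          (if p.2 = 0 then s1 p.1 else s2 p.1)) ≤ 1 - ε := by
  have hbox : ∀ b, s1 b + s2 b ≤ 1 / 2 := fun b => hsplit b ▸ (hwB b).2
  have hpart : ∀ p : Fin m × Fin 2, (if p.2 = 0 then s1 p.1 else s2 p.1) ≤ 1 / 2 - ε := by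
    rintro ⟨b, i⟩
    by_cases hi : i = 0
    · simpa only [hi, if_true] using (hs1 b).2
    · simp only [hi, if_false]
      linarith [hbox b, (hs1 b).1]
  obtain ⟨f, hf⟩ := exists_triple_packing _ (by norm_num) (by linarith) hbox hpart
  refine ⟨(m * 2 + 2) / 3, f, ?_, fun t => (hf t).trans_eq (by ring)⟩
  have hB : ((m * 2 + 2) / 3 * 3 : ℕ) ≤ 2 * m + 2 := by omega
  have hB' : (((m * 2 + 2) / 3 : ℕ) : ℝ) * 3 ≤ 2 * m + 2 := by exact_mod_cast hB
  linarith

/-- Pairing boxes of bounded weight (`d = 1`): `m` boxes with total weight in `[ε, 1/2]`,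
each splittable into a part of weight in `[ε, 1/2−ε]` and the remainder, can be packed
(assigning each of the two parts of each box to a bin) into at most `3 + 2m/3` bins,
each of total weight at most `1 − ε`. -/
theorem stmt_19 (m : ℕ) (ε : ℝ) (hε : 0 < ε) (hε5 : ε ≤ 1/5)
    (wB s1 s2 : Fin m → ℝ)
    (hwB : ∀ b, ε ≤ wB b ∧ wB b ≤ 1/2)
    (hsplit : ∀ b, wB b = s1 b + s2 b)
    (hs1 : ∀ b, ε ≤ s1 b ∧ s1 b ≤ 1/2 - ε)
    (hs2 : ∀ b, 0 ≤ s2 b) :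
    ∃ (B : ℕ) (f : Fin m × Fin 2 → Fin B),
      (B : ℝ) ≤ 3 + 2 * (m : ℝ) / 3 ∧
      ∀ t : Fin B,
        (∑ p ∈ Finset.univ.filter (fun p : Fin m × Fin 2 => f p = t),
          (if p.2 = 0 then s1 p.1 else s2 p.1)) ≤ 1 - ε :=
  stmt_19_general m ε hε5 wB s1 s2 hwB hsplit hs1
end
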